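/- arXiv:1405.0681 — 6 statements merged into one kernel-verified Lean document; each statement's English description precedes it below -/
import Mathlib

section
/- For all real numbers a ≥ 0, ε > 0, and p ≥ 1, the inequality (1 + a·ε)^p + (a + ε)^p ≤ (1 + ε)^p · (1 + a^p) holds. -/
/-! With `s = ε / (1 + ε)`, both `1 + a ε` and `a + ε` are `1 + ε` times a convex combination of
`1` and `a`, with the weights `(1 - s, s)` and `(s, 1 - s)` swapped. Pulling out `(1 + ε) ^ p` and
adding the two convexity inequalities for `t ↦ t ^ p` gives the bound. -/

theorem ConvexOn.map_add_map_swap_le {𝕜 E β : Type*} [Semiring 𝕜] [PartialOrder 𝕜]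
    [AddCommMonoid E] [AddCommMonoid β] [PartialOrder β] [IsOrderedAddMonoid β]
    [SMul 𝕜 E] [Module 𝕜 β] {s : Set E} {f : E → β} (hf : ConvexOn 𝕜 s f)
    {x y : E} (hx : x ∈ s) (hy : y ∈ s) {a b : 𝕜} (ha : 0 ≤ a) (hb : 0 ≤ b) (hab : a + b = 1) :
    f (a • x + b • y) + f (b • x + a • y) ≤ f x + f y :=
  calc f (a • x + b • y) + f (b • x + a • y)
      ≤ (a • f x + b • f y) + (b • f x + a • f y) :=
        add_le_add (hf.2 hx hy ha hb hab) (hf.2 hx hy hb ha ((add_comm b a).trans hab))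
    _ = f x + f y := by
        rw [add_add_add_comm, ← add_smul, ← add_smul, add_comm b a, hab,
          one_smul, one_smul]

theorem stmt_0 (a ε p : ℝ) (ha : 0 ≤ a) (hε : 0 < ε) (hp : 1 ≤ p) :
    (1 + a * ε) ^ p + (a + ε) ^ p ≤ (1 + ε) ^ p * (1 + a ^ p) := by
  have hε₁ : 0 < 1 + ε := by linarith
  set s := ε / (1 + ε) with hs
  have hs₀ : 0 ≤ s := by positivity
  have hs₁ : 0 ≤ 1 - s := by rw [hs, sub_nonneg, div_le_one hε₁]; linarith
  have hu : 1 + a * ε = (1 + ε) * ((1 - s) * 1 + s * a) := by rw [hs]; field_simp; ring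
  have hv : a + ε = (1 + ε) * (s * 1 + (1 - s) * a) := by rw [hs]; field_simp; ring
  have hconv : ((1 - s) * 1 + s * a) ^ p + (s * 1 + (1 - s) * a) ^ p ≤ 1 ^ p + a ^ p :=
    (convexOn_rpow hp).map_add_map_swap_le (Set.mem_Ici.2 zero_le_one) (Set.mem_Ici.2 ha)
      hs₁ hs₀ (sub_add_cancel 1 s)
  rw [Real.one_rpow] at hconv
  rw [hu, hv, Real.mul_rpow hε₁.le (by positivity), Real.mul_rpow hε₁.le (by positivity), ← mul_add]
  exact mul_le_mul_of_nonneg_left hconv (by positivity)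
end

section
/- Let 0 < ε < 1, p ≥ 1, and set c = (1 - ε^p/2^p)^(1/p). Then for all a in the interval [ε/(2c), 2c/ε], the inequality (1-ε)^p · (1 + a^p) ≤ (a·c - ε/2)^p + (c - a·ε/2)^p holds. -/
/-!
Minkowski's inequality in `ℓ^p(ℝ²)`, applied to `(a c - t, c - a t) = c (a, 1) - t (1, a)` with
`t = ε / 2`, gives `‖(a c - t, c - a t)‖_p ≥ (c - t) ‖(a, 1)‖_p`, since `(1, a)` and `(a, 1)` have the
same norm. It remains to see `1 - ε ≤ c - ε / 2`, i.e. `1 - t ≤ (1 - t^p)^(1/p)`, which holds because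
`(1 - t)^p ≤ 1 - t ≤ 1 - t^p` for `0 ≤ t ≤ 1`.
-/

open Real

namespace Real

variable {p : ℝ}

theorem one_sub_le_rpow_one_div_of_le_one {t : ℝ} (hp : 1 ≤ p) (ht0 : 0 ≤ t) (ht1 : t ≤ 1) :
    1 - t ≤ (1 - t ^ p) ^ (1 / p) := by
  have hp0 : 0 < p := by linarith
  have hpow_le : (1 - t) ^ p ≤ 1 - t ^ p := by
    linarith [rpow_le_self_of_le_one (sub_nonneg.2 ht1) (by linarith) hp,
      rpow_le_self_of_le_one ht0 ht1 hp]
  rw [one_div, le_rpow_inv_iff_of_pos (by linarith)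
    (by linarith [rpow_nonneg (sub_nonneg.2 ht1) p]) hp0]
  exact hpow_le

theorem rpow_mul_rpow_one_div {k s : ℝ} (hp : p ≠ 0) (hk : 0 ≤ k) (hs : 0 ≤ s) :
    (k ^ p * s) ^ (1 / p) = k * s ^ (1 / p) := by
  rw [mul_rpow (rpow_nonneg hk p) hs, one_div, rpow_rpow_inv hk hp]

theorem rpow_add_rpow_one_div_le {x y u v : ℝ} (hp : 1 ≤ p)
    (hx : 0 ≤ x) (hy : 0 ≤ y) (hu : 0 ≤ u) (hv : 0 ≤ v) :
    ((x + u) ^ p + (y + v) ^ p) ^ (1 / p) ≤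
      (x ^ p + y ^ p) ^ (1 / p) + (u ^ p + v ^ p) ^ (1 / p) := by
  simpa [Fin.sum_univ_two] using
    Lp_add_le_of_nonneg (s := Finset.univ) (f := ![x, y]) (g := ![u, v]) hp
      (by simp [Fin.forall_fin_two, hx, hy]) (by simp [Fin.forall_fin_two, hu, hv])

theorem sub_rpow_mul_one_add_rpow_le {t c a : ℝ} (hp : 1 ≤ p) (ha : 0 ≤ a) (ht : 0 ≤ t)
    (htc : t ≤ c) (hac : t ≤ a * c) (hca : a * t ≤ c) :
    (c - t) ^ p * (1 + a ^ p) ≤ (a * c - t) ^ p + (c - a * t) ^ p := by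
  have hp0 : p ≠ 0 := by positivity
  have hc : 0 ≤ c := ht.trans htc
  have hN : 0 ≤ 1 + a ^ p := by positivity
  have hmink := rpow_add_rpow_one_div_le hp (sub_nonneg.2 hac) (sub_nonneg.2 hca) ht
    (mul_nonneg ha ht)
  have hsum : (a * c - t + t) ^ p + (c - a * t + a * t) ^ p = c ^ p * (1 + a ^ p) := by
    rw [sub_add_cancel, sub_add_cancel, mul_rpow ha hc]; ring
  have hshift : t ^ p + (a * t) ^ p = t ^ p * (1 + a ^ p) := by
    rw [mul_rpow ha ht]; ring
  rw [hsum, hshift, rpow_mul_rpow_one_div hp0 hc hN, rpow_mul_rpow_one_div hp0 ht hN] at hmink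
  rw [← rpow_le_rpow_iff (by positivity) (by positivity) (one_div_pos.2 (by positivity : 0 < p)),
    rpow_mul_rpow_one_div hp0 (sub_nonneg.2 htc) hN, sub_mul]
  linarith

end Real

theorem stmt_1 (ε p : ℝ) (hε0 : 0 < ε) (hε1 : ε < 1) (hp : 1 ≤ p)
    (c : ℝ) (hc : c = (1 - ε ^ p / 2 ^ p) ^ (1 / p))
    (a : ℝ) (ha : a ∈ Set.Icc (ε / (2 * c)) (2 * c / ε)) :
    (1 - ε) ^ p * (1 + a ^ p) ≤ (a * c - ε / 2) ^ p + (c - a * ε / 2) ^ p := by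
  rw [← div_rpow hε0.le zero_le_two] at hc
  have hc_ge : 1 - ε / 2 ≤ c :=
    hc ▸ one_sub_le_rpow_one_div_of_le_one hp (by positivity) (by linarith)
  have hc0 : 0 < c := by linarith
  obtain ⟨ha1, ha2⟩ := ha
  have ha0 : 0 ≤ a := (div_nonneg hε0.le (by positivity)).trans ha1
  have hac : ε / 2 ≤ a * c := by
    rw [div_le_iff₀ (by positivity)] at ha1; linarith
  have hca : a * (ε / 2) ≤ c := by
    rw [le_div_iff₀ hε0] at ha2; linarith
  calc (1 - ε) ^ p * (1 + a ^ p) ≤ (c - ε / 2) ^ p * (1 + a ^ p) := by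
        gcongr ?_ ^ p * _
        linarith
    _ ≤ (a * c - ε / 2) ^ p + (c - a * (ε / 2)) ^ p :=
        sub_rpow_mul_one_add_rpow_le hp ha0 (by positivity) (by linarith) hac hca
    _ = (a * c - ε / 2) ^ p + (c - a * ε / 2) ^ p := by rw [mul_div_assoc]
end

section
/- Let 0 < ε < 1, p ≥ 1, and set c = (1 - ε^p/2^p)^(1/p). Then for all a ≥ 0 with a ≤ ε/(2c) or a ≥ 2c/ε, the inequality (1-ε)^p · (1 + a^p) ≤ |1 - a|^p holds. -/
/-!
Superadditivity of `x ↦ x ^ p` for `p ≥ 1` gives `1 + a ^ p ≤ (1 + a) ^ p`, so it suffices to show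
the linear inequality `(1 - ε) (1 + a) ≤ |1 - a|`, which says `(2 - ε) a ≤ ε` for `a ≤ 1` and
`2 - ε ≤ ε a` for `a ≥ 1`. Superadditivity also gives `c ≥ 1 - ε / 2`, and with this lower bound on
`c` both alternatives on `a` turn into these two linear conditions.
-/

open Real

lemma one_sub_le_rpow_one_div_one_sub_rpow {t p : ℝ} (ht0 : 0 ≤ t) (ht1 : t ≤ 1) (hp : 1 ≤ p) :
    1 - t ≤ (1 - t ^ p) ^ (1 / p) := by
  have hsum : (1 - t) ^ p + t ^ p ≤ 1 := by
    simpa using add_rpow_le_rpow_add (sub_nonneg.2 ht1) ht0 hp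
  have := rpow_nonneg (sub_nonneg.2 ht1) p
  rw [one_div, le_rpow_inv_iff_of_pos (sub_nonneg.2 ht1) (by linarith) (by linarith)]
  linarith

lemma one_sub_mul_one_add_le_abs_one_sub {ε a : ℝ} (hε : ε < 1) (ha : 0 ≤ a)
    (h : (2 - ε) * a ≤ ε ∨ 2 - ε ≤ ε * a) :
    (1 - ε) * (1 + a) ≤ |1 - a| := by
  rcases h with h | h
  · have ha1 : a ≤ 1 := by nlinarith
    rw [abs_of_nonneg (sub_nonneg.2 ha1)]
    linarith
  · have ha1 : 1 ≤ a := by nlinarith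
    rw [abs_of_nonpos (sub_nonpos.2 ha1)]
    linarith

theorem stmt_2 (ε p : ℝ) (hε0 : 0 < ε) (hε1 : ε < 1) (hp : 1 ≤ p)
    (c : ℝ) (hc : c = (1 - ε ^ p / 2 ^ p) ^ (1 / p))
    (a : ℝ) (ha0 : 0 ≤ a) (ha : a ≤ ε / (2 * c) ∨ 2 * c / ε ≤ a) :
    (1 - ε) ^ p * (1 + a ^ p) ≤ |1 - a| ^ p := by
  have hc_ge : 1 - ε / 2 ≤ c := by
    rw [hc, ← div_rpow hε0.le zero_le_two]
    exact one_sub_le_rpow_one_div_one_sub_rpow (by positivity) (by linarith) hp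
  have hlin : (1 - ε) * (1 + a) ≤ |1 - a| := by
    refine one_sub_mul_one_add_le_abs_one_sub hε1 ha0 (ha.imp (fun h => ?_) (fun h => ?_))
    · have : a ≤ ε / (2 - ε) := h.trans (by gcongr <;> linarith)
      rwa [le_div_iff₀ (by linarith), mul_comm] at this
    · have : (2 - ε) / ε ≤ a := le_trans (by gcongr; linarith) h
      rwa [div_le_iff₀ hε0, mul_comm] at this
  calc (1 - ε) ^ p * (1 + a ^ p)
      ≤ (1 - ε) ^ p * (1 + a) ^ p := by
        gcongr
        simpa using add_rpow_le_rpow_add zero_le_one ha0 hp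
    _ = ((1 - ε) * (1 + a)) ^ p := (mul_rpow (by linarith) (by linarith)).symm
    _ ≤ |1 - a| ^ p := by gcongr
end

section
/- Let φ be an increasing concave function on [0,1] with φ(0)=0 and lower dilation index γ_φ > 0. Then there exists a constant C > 0 such that φ(t) ≤ ∫₀ᵗ φ(s)/s ds ≤ C·φ(t) for all 0 < t ≤ 1. -/
/-!
Concavity and `φ 0 = 0` make `φ s / s` antitone, so on `(0, t]` the integrand is at least
`φ t / t`, which gives the lower bound. For the upper bound, writing `s = t · (s / t)` the
dilation bound gives `φ s ≤ C₁ (s / t)^η φ t`, so the integrand is dominated by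
`C₁ φ(t) t^(-η) s^(η - 1)`, whose integral over `[0, t]` is `(C₁ / η) φ t`.
-/

open MeasureTheory intervalIntegral Set

/-- The quantitative form of a positive lower dilation index: `m_φ(t) ≤ C t^η` on `(0, 1]`. -/
def HasLowerDilationBound (φ : ℝ → ℝ) (C η : ℝ) : Prop :=
  ∀ s t : ℝ, 0 < s → s ≤ 1 → 0 < t → t ≤ 1 → φ (s * t) ≤ C * t ^ η * φ s

theorem ConcaveOn.antitoneOn_div_self {f : ℝ → ℝ} {b : ℝ} (hf : ConcaveOn ℝ (Icc 0 b) f)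
    (hf0 : f 0 = 0) : AntitoneOn (fun x => f x / x) (Ioc 0 b) := by
  intro x hx y hy hxy
  have hb : 0 ≤ b := hx.1.le.trans hx.2
  have hslope := hf.antitoneOn_slope_gt (left_mem_Icc.2 hb)
    ⟨Ioc_subset_Icc_self hx, hx.1⟩ ⟨Ioc_subset_Icc_self hy, hy.1⟩ hxy
  simpa only [slope_def_field, hf0, sub_zero] using hslope

theorem integral_mul_rpow_sub_one (K : ℝ) {η : ℝ} (hη : 0 < η) (t : ℝ) :
    ∫ x in (0 : ℝ)..t, K * x ^ (η - 1) = K * t ^ η / η := by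
  rw [intervalIntegral.integral_const_mul, integral_rpow (Or.inl (by linarith)), sub_add_cancel,
    Real.zero_rpow hη.ne', sub_zero, mul_div_assoc]

section DilationBound

variable {φ : ℝ → ℝ} {C η t : ℝ}

theorem HasLowerDilationBound.div_le (h : HasLowerDilationBound φ C η) (ht1 : t ≤ 1) {x : ℝ}
    (hx : 0 < x) (hxt : x ≤ t) : φ x / x ≤ C * φ t / t ^ η * x ^ (η - 1) := by
  have ht : 0 < t := hx.trans_le hxt
  have hφx : φ x ≤ C * (x / t) ^ η * φ t := by
    simpa only [mul_div_cancel₀ x ht.ne'] using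
      h t (x / t) ht ht1 (div_pos hx ht) ((div_le_one ht).2 hxt)
  calc φ x / x ≤ C * (x / t) ^ η * φ t / x := div_le_div_of_nonneg_right hφx hx.le
    _ = C * φ t / t ^ η * x ^ (η - 1) := by
      rw [Real.div_rpow hx.le ht.le, Real.rpow_sub hx, Real.rpow_one]
      field_simp

theorem HasLowerDilationBound.intervalIntegrable_div_self (h : HasLowerDilationBound φ C η)
    (hη : 0 < η) (hmono : MonotoneOn φ (Icc 0 1)) (hpos : ∀ x, 0 < x → x ≤ 1 → 0 < φ x)
    (ht : 0 < t) (ht1 : t ≤ 1) : IntervalIntegrable (fun x => φ x / x) volume 0 t := by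
  have hφ : IntervalIntegrable φ volume 0 t :=
    (hmono.mono (by simpa [uIcc_of_le ht.le] using Icc_subset_Icc_right ht1)).intervalIntegrable
  have hmeas : AEStronglyMeasurable (fun x => φ x / x) (volume.restrict (uIoc 0 t)) :=
    hφ.def'.aestronglyMeasurable.mul measurable_inv.aestronglyMeasurable
  refine ((intervalIntegrable_rpow' (by linarith : -1 < η - 1)).const_mul
    (C * φ t / t ^ η)).mono_fun hmeas ?_
  rw [uIoc_of_le ht.le]
  refine (ae_restrict_mem measurableSet_Ioc).mono fun x hx => ?_
  have hnonneg : 0 ≤ φ x / x := div_nonneg (hpos x hx.1 (hx.2.trans ht1)).le hx.1.le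
  have hle := h.div_le ht1 hx.1 hx.2
  simpa only [Real.norm_of_nonneg hnonneg, Real.norm_of_nonneg (hnonneg.trans hle)] using hle

theorem HasLowerDilationBound.integral_div_self_le (h : HasLowerDilationBound φ C η)
    (hη : 0 < η) (ht : 0 < t) (ht1 : t ≤ 1)
    (hint : IntervalIntegrable (fun x => φ x / x) volume 0 t) :
    ∫ x in (0 : ℝ)..t, φ x / x ≤ C / η * φ t := by
  calc ∫ x in (0 : ℝ)..t, φ x / x
        ≤ ∫ x in (0 : ℝ)..t, C * φ t / t ^ η * x ^ (η - 1) :=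
        integral_mono_on_of_le_Ioo ht.le hint
          ((intervalIntegrable_rpow' (by linarith)).const_mul _)
          fun x hx => h.div_le ht1 hx.1 hx.2.le
    _ = C / η * φ t := by
      rw [integral_mul_rpow_sub_one _ hη]
      field_simp

end DilationBound

theorem ConcaveOn.le_integral_div_self {f : ℝ → ℝ} {b t : ℝ}
    (hf : ConcaveOn ℝ (Icc 0 b) f) (hf0 : f 0 = 0) (ht : 0 < t) (htb : t ≤ b)
    (hint : IntervalIntegrable (fun x => f x / x) volume 0 t) :
    f t ≤ ∫ x in (0 : ℝ)..t, f x / x := by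
  calc f t = ∫ _ in (0 : ℝ)..t, f t / t := by
        rw [intervalIntegral.integral_const, smul_eq_mul, sub_zero, mul_div_cancel₀ _ ht.ne']
    _ ≤ ∫ x in (0 : ℝ)..t, f x / x :=
        integral_mono_on_of_le_Ioo ht.le intervalIntegrable_const hint fun x hx =>
          hf.antitoneOn_div_self hf0 ⟨hx.1, hx.2.le.trans htb⟩ ⟨ht, htb⟩ hx.2.le

/-- If `φ` is increasing and concave on `[0,1]` with `φ(0)=0` and lower dilation index
`γ_φ > 0` (expressed concretely via `φ(st) ≤ C₁ t^η φ(s)`), then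
`φ(t) ≤ ∫₀ᵗ φ(s)/s ds ≤ C φ(t)` for `0 < t ≤ 1`. -/
theorem stmt_6 (φ : ℝ → ℝ)
    (hφ0 : φ 0 = 0)
    (hφpos : ∀ t, 0 < t → t ≤ 1 → 0 < φ t)
    (hφmono : MonotoneOn φ (Set.Icc (0:ℝ) 1))
    (hφconc : ConcaveOn ℝ (Set.Icc (0:ℝ) 1) φ)
    (C₁ η : ℝ) (hC₁ : 0 < C₁) (hη : 0 < η)
    (hindex : ∀ s t : ℝ, 0 < s → s ≤ 1 → 0 < t → t ≤ 1 →
      φ (s * t) ≤ C₁ * t ^ η * φ s) :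
    ∃ C : ℝ, 0 < C ∧ ∀ t : ℝ, 0 < t → t ≤ 1 →
      φ t ≤ (∫ s in (0:ℝ)..t, φ s / s) ∧ (∫ s in (0:ℝ)..t, φ s / s) ≤ C * φ t := by
  have hdil : HasLowerDilationBound φ C₁ η := hindex
  refine ⟨C₁ / η, by positivity, fun t ht ht1 => ?_⟩
  have hint := hdil.intervalIntegrable_div_self hη hφmono hφpos ht ht1
  exact ⟨hφconc.le_integral_div_self hφ0 ht ht1 hint,
    hdil.integral_div_self_le hη ht ht1 hint⟩
end

section
/- For every f ∈ L₁[0,1] and t > 0, the Peetre K-functional of f with respect to the couple (L₁, L∞) satisfies K(t, f; L₁, L∞) = ∫₀^{min(t,1)} f*(s) ds, where f* is the non-increasing rearrangement of |f|. -/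
open MeasureTheory

/-- The decreasing rearrangement of `|f|` with respect to Lebesgue measure on `[0,1]`. -/
noncomputable def decRearr (f : ℝ → ℝ) (t : ℝ) : ℝ :=
  sInf {τ : ℝ | 0 ≤ τ ∧
    (volume {s : ℝ | s ∈ Set.Icc (0:ℝ) 1 ∧ τ < |f s|}).toReal ≤ t}

/-- The Peetre K-functional of `f` for the couple `(L₁[0,1], L∞[0,1])`. -/
noncomputable def KL1Linf (t : ℝ) (f : ℝ → ℝ) : ℝ :=
  sInf {r : ℝ | ∃ g h : ℝ → ℝ,
    (∀ x ∈ Set.Icc (0:ℝ) 1, f x = g x + h x) ∧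
    IntegrableOn g (Set.Icc (0:ℝ) 1) ∧
    MemLp h ⊤ (volume.restrict (Set.Icc (0:ℝ) 1)) ∧
    r = (∫ x in Set.Icc (0:ℝ) 1, |g x|) +
      t * (eLpNorm h ⊤ (volume.restrict (Set.Icc (0:ℝ) 1))).toReal}

/-!
The rearrangement `f*` is equimeasurable with `|f|`: for `s > 0` and `u ≥ 0` one has
`f*(s) > u ↔ s < m{|f| > u}`, so both have the distribution function `u ↦ m{|f| > u}`. By the
layer-cake formula, `∫₀ᵗ (f* - c)₊ = ∫ (|f| - c)₊` whenever `f*(t) ≤ c`, and taking `c = f*(t)`,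
`∫₀ᵗ f* = ∫ (|f| - f*(t))₊ + t f*(t)`.

Lower bound: if `f = g + h` with `‖h‖∞ ≤ M`, then `f* ≤ g* + M`, so
`∫₀^{min(t,1)} f* ≤ ∫₀¹ g* + t M = ‖g‖₁ + t M`.
Upper bound: truncating `f` at height `c = f*(min(t,1))` splits it as `g + h` with
`|g| = (|f| - c)₊` and `‖h‖∞ ≤ c`; for `t > 1` one has `c = f*(1) = 0`.
-/

open Set Filter Topology

section Equimeasurable

variable {α β : Type*} [MeasurableSpace α] [MeasurableSpace β] {μ : Measure α} {ν : Measure β}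
  {F : α → ℝ} {G : β → ℝ}

theorem lintegral_ofReal_eq_of_measure_lt_eq (hF : 0 ≤ᵐ[μ] F) (hG : 0 ≤ᵐ[ν] G)
    (hFm : AEMeasurable F μ) (hGm : AEMeasurable G ν)
    (h : ∀ u > 0, μ {x | u < F x} = ν {y | u < G y}) :
    ∫⁻ x, ENNReal.ofReal (F x) ∂μ = ∫⁻ y, ENNReal.ofReal (G y) ∂ν := by
  rw [lintegral_eq_lintegral_meas_lt μ hF hFm, lintegral_eq_lintegral_meas_lt ν hG hGm]
  exact setLIntegral_congr_fun measurableSet_Ioi h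

theorem integrable_iff_of_measure_lt_eq (hF : 0 ≤ᵐ[μ] F) (hG : 0 ≤ᵐ[ν] G)
    (hFm : AEMeasurable F μ) (hGm : AEMeasurable G ν)
    (h : ∀ u > 0, μ {x | u < F x} = ν {y | u < G y}) :
    Integrable F μ ↔ Integrable G ν := by
  simp only [Integrable, hasFiniteIntegral_iff_ofReal hF, hasFiniteIntegral_iff_ofReal hG,
    lintegral_ofReal_eq_of_measure_lt_eq hF hG hFm hGm h, hFm.aestronglyMeasurable,
    hGm.aestronglyMeasurable, true_and]

theorem integral_eq_of_measure_lt_eq (hF : 0 ≤ᵐ[μ] F) (hG : 0 ≤ᵐ[ν] G)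
    (hFm : AEMeasurable F μ) (hGm : AEMeasurable G ν)
    (h : ∀ u > 0, μ {x | u < F x} = ν {y | u < G y}) :
    ∫ x, F x ∂μ = ∫ y, G y ∂ν := by
  rw [integral_eq_lintegral_of_nonneg_ae hF hFm.aestronglyMeasurable,
    integral_eq_lintegral_of_nonneg_ae hG hGm.aestronglyMeasurable,
    lintegral_ofReal_eq_of_measure_lt_eq hF hG hFm hGm h]

end Equimeasurable

section Rearrangement

variable {α : Type*} [MeasurableSpace α]

noncomputable def distribFun (μ : Measure α) (f : α → ℝ) (τ : ℝ) : ℝ := μ.real {x | τ < |f x|}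

noncomputable def rearrangement (μ : Measure α) (f : α → ℝ) (s : ℝ) : ℝ :=
  sInf {τ | 0 ≤ τ ∧ distribFun μ f τ ≤ s}

theorem rearrangement_nonneg (μ : Measure α) (f : α → ℝ) (s : ℝ) : 0 ≤ rearrangement μ f s :=
  Real.sInf_nonneg fun _ hτ => hτ.1

theorem rearrangement_le_of_distribFun_le {μ : Measure α} {f : α → ℝ} {s u : ℝ} (hu : 0 ≤ u)
    (h : distribFun μ f u ≤ s) : rearrangement μ f s ≤ u :=
  csInf_le ⟨0, fun _ hτ => hτ.1⟩ ⟨hu, h⟩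

variable {μ : Measure α} [IsFiniteMeasure μ] {f g : α → ℝ} {s t u c : ℝ}

theorem distribFun_antitone (f : α → ℝ) : Antitone (distribFun μ f) :=
  fun _ _ hτ => measureReal_mono fun _ hx => lt_of_le_of_lt hτ hx

theorem distribFun_le_measureReal_univ (f : α → ℝ) (τ : ℝ) : distribFun μ f τ ≤ μ.real univ :=
  measureReal_mono (subset_univ _)

theorem distribFun_le_of_forall_gt {τ : ℝ} (h : ∀ τ' > τ, distribFun μ f τ' ≤ s) :
    distribFun μ f τ ≤ s := by
  set S : ℕ → Set α := fun n => {x | τ + 1 / ((n : ℝ) + 1) < |f x|}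
  have hS : Monotone S := fun m n hmn =>
    ofPred_subset_ofPred.2 fun x hx => lt_of_le_of_lt (by gcongr) hx
  have hunion : ⋃ n, S n = {x | τ < |f x|} := by
    ext x
    simp only [S, mem_iUnion, mem_ofPred_eq]
    refine ⟨fun ⟨n, hn⟩ => lt_trans (by linarith [Nat.one_div_pos_of_nat (α := ℝ) (n := n)]) hn,
      fun hx => ?_⟩
    obtain ⟨n, hn⟩ := exists_nat_one_div_lt (sub_pos.2 hx)
    exact ⟨n, by linarith⟩
  have hlim : Tendsto (fun n => μ.real (S n)) atTop (𝓝 (distribFun μ f τ)) := by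
    rw [distribFun, ← hunion]
    exact (ENNReal.tendsto_toReal (measure_ne_top _ _)).comp (tendsto_measure_iUnion_atTop hS)
  exact le_of_tendsto' hlim fun n =>
    h _ (lt_add_of_pos_right τ Nat.one_div_pos_of_nat)

theorem exists_distribFun_le (hf : AEMeasurable f μ) (hs : 0 < s) :
    ∃ τ, 0 ≤ τ ∧ distribFun μ f τ ≤ s := by
  set S : ℕ → Set α := fun n => {x | (n : ℝ) < |f x|}
  have hS : Antitone S := fun m n hmn =>
    ofPred_subset_ofPred.2 fun x hx => lt_of_le_of_lt (by exact_mod_cast hmn) hx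
  have hinter : ⋂ n, S n = ∅ := by
    ext x
    simp only [S, mem_iInter, mem_ofPred_eq, mem_empty_iff_false, iff_false, not_forall, not_lt]
    exact exists_nat_ge _
  have hlim : Tendsto (fun n : ℕ => distribFun μ f n) atTop (𝓝 0) := by
    have h := tendsto_measure_iInter_atTop (μ := μ)
      (fun n => nullMeasurableSet_lt aemeasurable_const (by fun_prop)) hS ⟨0, measure_ne_top _ _⟩
    rw [hinter, measure_empty] at h
    rw [← ENNReal.toReal_zero]
    exact (ENNReal.tendsto_toReal ENNReal.zero_ne_top).comp h
  obtain ⟨n, hn⟩ := (hlim.eventually (gt_mem_nhds hs)).exists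
  exact ⟨n, n.cast_nonneg, hn.le⟩

theorem rearrangement_eq_zero (f : α → ℝ) (hs : μ.real univ ≤ s) : rearrangement μ f s = 0 :=
  le_antisymm (rearrangement_le_of_distribFun_le le_rfl
    ((distribFun_le_measureReal_univ f 0).trans hs)) (rearrangement_nonneg μ f s)

theorem distribFun_rearrangement_le (hf : AEMeasurable f μ) (hs : 0 < s) :
    distribFun μ f (rearrangement μ f s) ≤ s := by
  obtain ⟨τ₀, hτ₀⟩ := exists_distribFun_le hf hs
  refine distribFun_le_of_forall_gt fun τ' hτ' => ?_
  obtain ⟨τ, hτ, hττ'⟩ := exists_lt_of_csInf_lt ⟨τ₀, hτ₀⟩ hτ'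
  exact (distribFun_antitone f hττ'.le).trans hτ.2

theorem rearrangement_le_iff (hf : AEMeasurable f μ) (hs : 0 < s) (hu : 0 ≤ u) :
    rearrangement μ f s ≤ u ↔ distribFun μ f u ≤ s :=
  ⟨fun h => (distribFun_antitone f h).trans (distribFun_rearrangement_le hf hs),
    rearrangement_le_of_distribFun_le hu⟩

theorem rearrangement_antitoneOn (hf : AEMeasurable f μ) :
    AntitoneOn (rearrangement μ f) (Ioi 0) := fun _ hs _ _ hss' =>
  rearrangement_le_of_distribFun_le (rearrangement_nonneg μ f _)
    ((distribFun_rearrangement_le hf hs).trans hss')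

theorem rearrangement_le_add (hg : AEMeasurable g μ) {M : ℝ} (hM : 0 ≤ M)
    (hfg : ∀ᵐ x ∂μ, |f x| ≤ |g x| + M) (hs : 0 < s) :
    rearrangement μ f s ≤ rearrangement μ g s + M := by
  refine rearrangement_le_of_distribFun_le (add_nonneg (rearrangement_nonneg μ g s) hM)
    (le_trans ?_ (distribFun_rearrangement_le hg hs))
  refine ENNReal.toReal_mono (measure_ne_top _ _) (measure_mono_ae ?_)
  filter_upwards [hfg] with x hx (hlt : _ < |f x|)
  show _ < |g x|
  linarith

theorem measure_lt_rearrangement (hf : AEMeasurable f μ) (ht : 0 < t) (hu : 0 ≤ u)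
    (htu : rearrangement μ f t ≤ u) :
    volume.restrict (Ioc 0 t) {s | u < rearrangement μ f s} = μ {x | u < |f x|} := by
  have hD : distribFun μ f u ≤ t := (rearrangement_le_iff hf ht hu).1 htu
  have hlevel : {s | u < rearrangement μ f s} ∩ Ioc 0 t = Ioo 0 (distribFun μ f u) := by
    ext s
    simp only [mem_inter_iff, mem_ofPred_eq, mem_Ioc, mem_Ioo]
    constructor
    · rintro ⟨hus, hs, -⟩
      exact ⟨hs, lt_of_not_ge fun h => hus.not_ge ((rearrangement_le_iff hf hs hu).2 h)⟩
    · rintro ⟨hs, hsD⟩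
      exact ⟨lt_of_not_ge fun h => hsD.not_ge ((rearrangement_le_iff hf hs hu).1 h), hs,
        hsD.le.trans hD⟩
  rw [Measure.restrict_apply' measurableSet_Ioc, hlevel, Real.volume_Ioo, sub_zero, distribFun,
    ofReal_measureReal]

theorem measure_lt_max_rearrangement_sub (hf : AEMeasurable f μ) (ht : 0 < t) (hc : 0 ≤ c)
    (htc : rearrangement μ f t ≤ c) (u : ℝ) (hu : 0 < u) :
    volume.restrict (Ioc 0 t) {s | u < max (rearrangement μ f s - c) 0} =
      μ {x | u < max (|f x| - c) 0} := by
  have hlt : ∀ a : ℝ, u < max (a - c) 0 ↔ c + u < a := fun a => by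
    rw [lt_max_iff, lt_sub_iff_add_lt', or_iff_left hu.not_gt]
  simp only [hlt]
  exact measure_lt_rearrangement hf ht (by linarith) (by linarith)

theorem aemeasurable_rearrangement (hf : AEMeasurable f μ) (t : ℝ) :
    AEMeasurable (rearrangement μ f) (volume.restrict (Ioc 0 t)) :=
  ((aemeasurable_restrict_of_antitoneOn measurableSet_Ioi
    (rearrangement_antitoneOn hf)).mono_set Ioc_subset_Ioi_self)

theorem integrableOn_max_rearrangement_sub (hf : Integrable f μ) (ht : 0 < t) (hc : 0 ≤ c)
    (htc : rearrangement μ f t ≤ c) :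
    IntegrableOn (fun s => max (rearrangement μ f s - c) 0) (Ioc 0 t) :=
  (integrable_iff_of_measure_lt_eq (.of_forall fun _ => le_max_right _ _)
    (.of_forall fun _ => le_max_right _ _)
    (((aemeasurable_rearrangement hf.1.aemeasurable t).sub aemeasurable_const).max
      aemeasurable_const)
    (by fun_prop) (measure_lt_max_rearrangement_sub hf.1.aemeasurable ht hc htc)).2
    ((hf.abs.sub (integrable_const c)).sup (integrable_const 0))

theorem integral_max_rearrangement_sub (hf : AEMeasurable f μ) (ht : 0 < t) (hc : 0 ≤ c)
    (htc : rearrangement μ f t ≤ c) :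
    ∫ s in Ioc 0 t, max (rearrangement μ f s - c) 0 = ∫ x, max (|f x| - c) 0 ∂μ :=
  integral_eq_of_measure_lt_eq (.of_forall fun _ => le_max_right _ _)
    (.of_forall fun _ => le_max_right _ _)
    (((aemeasurable_rearrangement hf t).sub aemeasurable_const).max aemeasurable_const)
    (by fun_prop) (measure_lt_max_rearrangement_sub hf ht hc htc)

theorem rearrangement_eqOn_max_sub_add (hf : AEMeasurable f μ) (ht : 0 < t) :
    EqOn (rearrangement μ f)
      (fun s => max (rearrangement μ f s - rearrangement μ f t) 0 + rearrangement μ f t)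
      (Ioc 0 t) := fun s hs => by
  dsimp only
  rw [max_eq_left (sub_nonneg.2 (rearrangement_antitoneOn hf hs.1 ht hs.2)), sub_add_cancel]

theorem integrableOn_rearrangement (hf : Integrable f μ) (ht : 0 < t) :
    IntegrableOn (rearrangement μ f) (Ioc 0 t) :=
  ((integrableOn_max_rearrangement_sub hf ht (rearrangement_nonneg μ f t) le_rfl).add
    (integrableOn_const measure_Ioc_lt_top.ne)).congr_fun
    (rearrangement_eqOn_max_sub_add hf.1.aemeasurable ht).symm measurableSet_Ioc

theorem integral_rearrangement_eq_add (hf : Integrable f μ) (ht : 0 < t) :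
    ∫ s in Ioc 0 t, rearrangement μ f s =
      ∫ x, max (|f x| - rearrangement μ f t) 0 ∂μ + t * rearrangement μ f t := by
  have hc := rearrangement_nonneg μ f t
  rw [setIntegral_congr_fun measurableSet_Ioc
      (rearrangement_eqOn_max_sub_add hf.1.aemeasurable ht),
    integral_add (integrableOn_max_rearrangement_sub hf ht hc le_rfl)
      (integrableOn_const measure_Ioc_lt_top.ne),
    integral_max_rearrangement_sub hf.1.aemeasurable ht hc le_rfl, setIntegral_const,
    Real.volume_real_Ioc_of_le ht.le, sub_zero, smul_eq_mul]

theorem integral_rearrangement_eq_integral_abs (hf : Integrable f μ) (ht : 0 < t)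
    (hμt : μ.real univ ≤ t) : ∫ s in Ioc 0 t, rearrangement μ f s = ∫ x, |f x| ∂μ := by
  simp only [integral_rearrangement_eq_add hf ht, rearrangement_eq_zero f hμt, sub_zero,
    abs_nonneg, max_eq_left, mul_zero, add_zero]

theorem integral_rearrangement_le_of_abs_le_add (hg : Integrable g μ) {M : ℝ} (hM : 0 ≤ M)
    (hfg : ∀ᵐ x ∂μ, |f x| ≤ |g x| + M) (ht : 0 < t) (htμ : t ≤ μ.real univ) :
    ∫ s in Ioc 0 t, rearrangement μ f s ≤ ∫ x, |g x| ∂μ + t * M := by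
  have hg' := integrableOn_rearrangement hg ht
  have hM' : IntegrableOn (fun _ => M) (Ioc 0 t) := integrableOn_const measure_Ioc_lt_top.ne
  calc ∫ s in Ioc 0 t, rearrangement μ f s ≤ ∫ s in Ioc 0 t, (rearrangement μ g s + M) :=
        integral_mono_of_nonneg (.of_forall fun s => rearrangement_nonneg μ f s) (hg'.add hM')
          ((ae_restrict_mem measurableSet_Ioc).mono fun s hs =>
            rearrangement_le_add hg.1.aemeasurable hM hfg hs.1)
    _ = (∫ s in Ioc 0 t, rearrangement μ g s) + t * M := by
        rw [integral_add hg' hM', setIntegral_const, Real.volume_real_Ioc_of_le ht.le, sub_zero,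
          smul_eq_mul]
    _ ≤ (∫ s in Ioc 0 (μ.real univ), rearrangement μ g s) + t * M :=
        add_le_add_left (setIntegral_mono_set (integrableOn_rearrangement hg (ht.trans_le htμ))
          (.of_forall fun s => rearrangement_nonneg μ g s)
          (Ioc_subset_Ioc le_rfl htμ).eventuallyLE) _
    _ = ∫ x, |g x| ∂μ + t * M := by
        rw [integral_rearrangement_eq_integral_abs hg (ht.trans_le htμ) le_rfl]

end Rearrangement

theorem abs_max_neg_min_le {c : ℝ} (hc : 0 ≤ c) (a : ℝ) : |max (-c) (min c a)| ≤ c :=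
  abs_le.2 ⟨le_max_left _ _, max_le (by linarith) (min_le_left _ _)⟩

theorem abs_sub_max_neg_min {c : ℝ} (hc : 0 ≤ c) (a : ℝ) :
    |a - max (-c) (min c a)| = max (|a| - c) 0 := by
  rcases le_total a (-c) with ha | ha
  · rw [min_eq_right (by linarith), max_eq_left ha, abs_of_nonpos (by linarith),
      abs_of_nonpos (by linarith), max_eq_left (by linarith)]
    ring
  rcases le_total a c with ha' | ha'
  · rw [min_eq_right ha', max_eq_right ha, sub_self, abs_zero,
      max_eq_right (by linarith [abs_le.2 ⟨ha, ha'⟩])]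
  · rw [min_eq_left ha', max_eq_right (by linarith), abs_of_nonneg (by linarith),
      abs_of_nonneg (by linarith), max_eq_left (by linarith)]

theorem ae_abs_le_toReal_eLpNorm_top {α : Type*} [MeasurableSpace α] {μ : Measure α}
    {h : α → ℝ} (hh : MemLp h ⊤ μ) : ∀ᵐ x ∂μ, |h x| ≤ (eLpNorm h ⊤ μ).toReal := by
  have hfin : eLpNormEssSup h μ ≠ ⊤ := by simpa [eLpNorm_exponent_top] using hh.2.ne
  filter_upwards [ae_le_eLpNormEssSup (f := h) (μ := μ)] with x hx
  rw [eLpNorm_exponent_top]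
  simpa using ENNReal.toReal_mono hfin hx

theorem decRearr_eq_rearrangement (f : ℝ → ℝ) :
    decRearr f = rearrangement (volume.restrict (Icc 0 1)) f := by
  funext s
  simp only [decRearr, rearrangement, distribFun, measureReal_restrict_apply' measurableSet_Icc,
    inter_comm _ (Icc _ _)]
  rfl

theorem KL1Linf_le {t : ℝ} (ht : 0 ≤ t) {f g h : ℝ → ℝ}
    (hfgh : ∀ x ∈ Icc (0:ℝ) 1, f x = g x + h x) (hg : IntegrableOn g (Icc 0 1))
    (hh : MemLp h ⊤ (volume.restrict (Icc 0 1))) :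
    KL1Linf t f ≤
      (∫ x in Icc (0:ℝ) 1, |g x|) + t * (eLpNorm h ⊤ (volume.restrict (Icc (0:ℝ) 1))).toReal :=
  csInf_le ⟨0, by rintro _ ⟨g, h, -, -, -, rfl⟩; positivity⟩ ⟨g, h, hfgh, hg, hh, rfl⟩

theorem le_KL1Linf {t V : ℝ} {f : ℝ → ℝ} (hf : IntegrableOn f (Icc 0 1))
    (hV : ∀ g h : ℝ → ℝ, (∀ x ∈ Icc (0:ℝ) 1, f x = g x + h x) → IntegrableOn g (Icc 0 1) →
      MemLp h ⊤ (volume.restrict (Icc 0 1)) →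
      V ≤ (∫ x in Icc (0:ℝ) 1, |g x|) +
        t * (eLpNorm h ⊤ (volume.restrict (Icc (0:ℝ) 1))).toReal) :
    V ≤ KL1Linf t f :=
  le_csInf ⟨_, f, 0, fun x _ => (add_zero _).symm, hf, MemLp.zero', rfl⟩
    (by rintro _ ⟨g, h, hfgh, hg, hh, rfl⟩; exact hV g h hfgh hg hh)

theorem integral_rearrangement_le_KL1Linf {f : ℝ → ℝ} (hf : IntegrableOn f (Icc 0 1)) {t : ℝ}
    (ht : 0 < t) :
    ∫ s in Ioc 0 (min t 1), rearrangement (volume.restrict (Icc 0 1)) f s ≤ KL1Linf t f := by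
  refine le_KL1Linf hf fun g h hfgh hg hh => ?_
  set M := (eLpNorm h ⊤ (volume.restrict (Icc (0:ℝ) 1))).toReal
  have hfg : ∀ᵐ x ∂(volume.restrict (Icc (0:ℝ) 1)), |f x| ≤ |g x| + M := by
    filter_upwards [ae_restrict_mem measurableSet_Icc, ae_abs_le_toReal_eLpNorm_top hh]
      with x hx hhx
    rw [hfgh x hx]
    exact (abs_add_le _ _).trans (by linarith)
  calc _ ≤ (∫ x in Icc (0:ℝ) 1, |g x|) + min t 1 * M :=
        integral_rearrangement_le_of_abs_le_add hg ENNReal.toReal_nonneg hfg (lt_min ht one_pos)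
          (by simp)
    _ ≤ _ := by gcongr; exact min_le_left _ _

theorem KL1Linf_le_integral_rearrangement {f : ℝ → ℝ} (hf : IntegrableOn f (Icc 0 1)) {t : ℝ}
    (ht : 0 < t) :
    KL1Linf t f ≤ ∫ s in Ioc 0 (min t 1), rearrangement (volume.restrict (Icc 0 1)) f s := by
  set μ := volume.restrict (Icc (0:ℝ) 1)
  have hfm : AEMeasurable f μ := hf.1.aemeasurable
  have ht₁ : 0 < min t 1 := lt_min ht one_pos
  set c := rearrangement μ f (min t 1)
  have hc : 0 ≤ c := rearrangement_nonneg μ f _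
  set h : ℝ → ℝ := fun x => max (-c) (min c (f x))
  have hh : MemLp h ⊤ μ :=
    memLp_top_of_bound (by fun_prop) c (.of_forall fun x => abs_max_neg_min_le hc (f x))
  have htc : t * c = min t 1 * c := by
    rcases le_total t 1 with h1 | h1
    · rw [min_eq_left h1]
    · have hc0 : c = 0 := by
        simp only [c, min_eq_right h1]
        exact rearrangement_eq_zero f (by simp [μ])
      rw [hc0, mul_zero, mul_zero]
  calc KL1Linf t f ≤ (∫ x in Icc 0 1, |f x - h x|) + t * (eLpNorm h ⊤ μ).toReal :=
        KL1Linf_le ht.le (fun x _ => by ring) (hf.sub (hh.integrable le_top)) hh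
    _ ≤ (∫ x, max (|f x| - c) 0 ∂μ) + min t 1 * c := by
        rw [← htc]
        simp only [h, abs_sub_max_neg_min hc]
        gcongr
        refine ENNReal.toReal_le_of_le_ofReal hc ?_
        rw [eLpNorm_exponent_top]
        exact eLpNormEssSup_le_of_ae_bound (.of_forall fun x => abs_max_neg_min_le hc (f x))
    _ = ∫ s in Ioc 0 (min t 1), rearrangement μ f s :=
        (integral_rearrangement_eq_add hf ht₁).symm

/-- `K(t, f; L₁, L∞) = ∫₀^{min(t,1)} f*(s) ds`. -/
theorem stmt_9 (f : ℝ → ℝ) (hf : IntegrableOn f (Set.Icc (0:ℝ) 1))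
    (t : ℝ) (ht : 0 < t) :
    KL1Linf t f = ∫ s in (0:ℝ)..(min t 1), decRearr f s := by
  rw [intervalIntegral.integral_of_le (lt_min ht one_pos).le, decRearr_eq_rearrangement]
  exact le_antisymm (KL1Linf_le_integral_rearrangement hf ht)
    (integral_rearrangement_le_KL1Linf hf ht)
end

section
/- Let 1 ≤ p < ∞ and let (x_n) be a sequence of unit vectors in a Banach space X with the following property: for every ε ∈ (0,1) and every finite-dimensional subspace F of the closed span of finitely many x_i's, there exists n such that (1-ε)(‖x‖^p + |λ|^p)^{1/p} ≤ ‖x + λ x_n‖ ≤ (1+ε)(‖x‖^p + |λ|^p)^{1/p} for all x ∈ F of norm 1 and all scalars λ. Then for every ε > 0 there is a subsequence (z_j) of (x_n) such that for all scalars (λ_j), (1-ε)(Σ|λ_j|^p)^{1/p} ≤ ‖Σ λ_j z_j‖ ≤ (1+ε)(Σ|λ_j|^p)^{1/p}. -/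
/-!
Fix tolerances `θ_j ∈ (0, 1)` with `∏ (1 - θ_j) ≥ 1 - ε` and `∏ (1 + θ_j) ≤ 1 + ε`, and choose
the subsequence inductively: `x_{φ l}` is the vector the hypothesis provides, with tolerance
`θ_l`, for the span of all vectors chosen before. Scaling extends the estimate from unit vectors
to the whole span, and it forces `φ l` to exceed the earlier indices, since no vector is an almost
`ℓ_p`-extension of itself. Because `(a, b) ↦ (a ^ p + b ^ p) ^ (1 / p)` is monotone and positively
homogeneous, appending `λ_l x_{φ l}` to `∑_{j<l} λ_j x_{φ j}` multiplies the two-sided `ℓ_p`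
estimate of the partial sum by `1 ∓ θ_l`.
-/

open Finset

section ProductBounds

variable {ι R : Type*} [CommRing R] [LinearOrder R] [IsStrictOrderedRing R]

theorem one_sub_sum_le_prod_one_sub {s : Finset ι} {f : ι → R} (h0 : ∀ i ∈ s, 0 ≤ f i)
    (h1 : ∀ i ∈ s, f i ≤ 1) : 1 - ∑ i ∈ s, f i ≤ ∏ i ∈ s, (1 - f i) := by
  classical
  induction s using Finset.induction_on with
  | empty => simp
  | insert i s hi ih =>
    rw [sum_insert hi, prod_insert hi]
    have hs :=
      ih (fun j hj => h0 j (mem_insert_of_mem hj)) fun j hj => h1 j (mem_insert_of_mem hj)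
    have hsum : 0 ≤ ∑ j ∈ s, f j := sum_nonneg fun j hj => h0 j (mem_insert_of_mem hj)
    have hfi0 := h0 i (mem_insert_self i s)
    have hfi1 := sub_nonneg.2 (h1 i (mem_insert_self i s))
    nlinarith [mul_le_mul_of_nonneg_left hs hfi1]

theorem prod_one_add_mul_prod_one_sub_le_one {s : Finset ι} {f : ι → R}
    (h0 : ∀ i ∈ s, 0 ≤ f i) (h1 : ∀ i ∈ s, f i ≤ 1) :
    (∏ i ∈ s, (1 + f i)) * ∏ i ∈ s, (1 - f i) ≤ 1 := by
  rw [← prod_mul_distrib]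
  refine prod_le_one (fun i hi => ?_) fun i hi => ?_
  · nlinarith [h0 i hi, h1 i hi]
  · nlinarith [h0 i hi]

end ProductBounds

theorem exists_seq_one_sub_le_prod_and_prod_le_one_add {ε : ℝ} (hε : 0 < ε) :
    ∃ θ : ℕ → ℝ, (∀ j, 0 < θ j ∧ θ j < 1) ∧
      ∀ l, 1 - ε ≤ ∏ j ∈ range l, (1 - θ j) ∧ ∏ j ∈ range l, (1 + θ j) ≤ 1 + ε := by
  -- `δ = ε / (1 + ε)` satisfies `δ ≤ ε` and `(1 - δ)⁻¹ = 1 + ε`; then `θ j = δ / 2 ^ (j + 1)`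
  -- gives `1 - δ ≤ ∏ (1 - θ j)` and `∏ (1 + θ j) ≤ (∏ (1 - θ j))⁻¹`.
  obtain ⟨δ, hδ0, hδ1, hδε, hδinv⟩ :
      ∃ δ : ℝ, 0 < δ ∧ δ < 1 ∧ δ ≤ ε ∧ (1 - δ) * (1 + ε) = 1 :=
    ⟨ε / (1 + ε), by positivity, by rw [div_lt_one (by positivity)]; linarith,
      div_le_self hε.le (by linarith), by field_simp; ring⟩
  have hθ : ∀ j : ℕ, 0 < δ / 2 * (1 / 2) ^ j ∧ δ / 2 * (1 / 2) ^ j < 1 := fun j =>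
    ⟨by positivity,
      by nlinarith [pow_le_one₀ (by norm_num : (0 : ℝ) ≤ 1 / 2) (by norm_num) (n := j)]⟩
  refine ⟨fun j => δ / 2 * (1 / 2) ^ j, hθ, fun l => ?_⟩
  have h0 : ∀ j ∈ range l, 0 ≤ δ / 2 * (1 / 2 : ℝ) ^ j := fun j _ => (hθ j).1.le
  have h1 : ∀ j ∈ range l, δ / 2 * (1 / 2 : ℝ) ^ j ≤ 1 := fun j _ => (hθ j).2.le
  have hsum : ∑ j ∈ range l, δ / 2 * (1 / 2 : ℝ) ^ j ≤ δ := by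
    rw [← mul_sum]; nlinarith [sum_geometric_two_le l]
  have hlow : 1 - δ ≤ ∏ j ∈ range l, (1 - δ / 2 * (1 / 2 : ℝ) ^ j) :=
    (sub_le_sub_left hsum 1).trans (one_sub_sum_le_prod_one_sub h0 h1)
  have hmul := prod_one_add_mul_prod_one_sub_le_one h0 h1
  refine ⟨by linarith, ?_⟩
  have hU : 0 ≤ ∏ j ∈ range l, (1 + δ / 2 * (1 / 2 : ℝ) ^ j) :=
    prod_nonneg fun j hj => by linarith [h0 j hj]
  nlinarith [mul_le_mul_of_nonneg_left hlow hU]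

noncomputable def lpPairNorm (p a b : ℝ) : ℝ := (a ^ p + b ^ p) ^ (1 / p)

section lpPairNorm

variable {p a a' b b' c : ℝ}

theorem lpPairNorm_zero_left (hp : 0 < p) (hb : 0 ≤ b) : lpPairNorm p 0 b = b := by
  rw [lpPairNorm, Real.zero_rpow hp.ne', zero_add, one_div, Real.rpow_rpow_inv hb hp.ne']

theorem lpPairNorm_rpow_one_div_left (hp : 0 < p) (ha : 0 ≤ a) :
    lpPairNorm p (a ^ (1 / p)) b = (a + b ^ p) ^ (1 / p) := by
  rw [lpPairNorm, one_div, Real.rpow_inv_rpow ha hp.ne']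

theorem lpPairNorm_mul_mul (hp : 0 < p) (hc : 0 ≤ c) (ha : 0 ≤ a) (hb : 0 ≤ b) :
    lpPairNorm p (c * a) (c * b) = c * lpPairNorm p a b := by
  rw [lpPairNorm, lpPairNorm, Real.mul_rpow hc ha, Real.mul_rpow hc hb, ← mul_add,
    Real.mul_rpow (by positivity) (by positivity), one_div, Real.rpow_rpow_inv hc hp.ne']

theorem lpPairNorm_le_lpPairNorm (hp : 0 < p) (ha : 0 ≤ a) (hab : a ≤ a') (hb : 0 ≤ b)
    (hbb' : b ≤ b') :
    lpPairNorm p a b ≤ lpPairNorm p a' b' := by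
  unfold lpPairNorm
  gcongr

theorem mul_lpPairNorm_le_lpPairNorm_mul_left (hp : 0 < p) (hc0 : 0 ≤ c) (hc1 : c ≤ 1)
    (ha : 0 ≤ a) (hb : 0 ≤ b) :
    c * lpPairNorm p a b ≤ lpPairNorm p (c * a) b := by
  rw [← lpPairNorm_mul_mul hp hc0 ha hb]
  exact lpPairNorm_le_lpPairNorm hp (by positivity) le_rfl (by positivity)
    (mul_le_of_le_one_left hb hc1)

theorem lpPairNorm_mul_left_le_mul_lpPairNorm (hp : 0 < p) (hc : 1 ≤ c) (ha : 0 ≤ a)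
    (hb : 0 ≤ b) :
    lpPairNorm p (c * a) b ≤ c * lpPairNorm p a b := by
  rw [← lpPairNorm_mul_mul hp (by positivity) ha hb]
  exact lpPairNorm_le_lpPairNorm hp (by positivity) le_rfl hb (le_mul_of_one_le_left hb hc)

end lpPairNorm

section AlmostLpSum

variable {X : Type*} [NormedAddCommGroup X] [NormedSpace ℝ X] {p ε : ℝ} {y z : X}

def AlmostLpSum (p ε : ℝ) (y z : X) : Prop :=
  ∀ lam : ℝ, (1 - ε) * lpPairNorm p ‖y‖ |lam| ≤ ‖y + lam • z‖ ∧
    ‖y + lam • z‖ ≤ (1 + ε) * lpPairNorm p ‖y‖ |lam|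

theorem almostLpSum_zero_left (hp : 0 < p) (hε : 0 ≤ ε) (hz : ‖z‖ = 1) :
    AlmostLpSum p ε 0 z :=
  fun lam => by
    rw [norm_zero, lpPairNorm_zero_left hp (abs_nonneg lam), zero_add, norm_smul, hz, mul_one,
      Real.norm_eq_abs]
    constructor <;> nlinarith [abs_nonneg lam]

theorem AlmostLpSum.smul (hp : 0 < p) (h : AlmostLpSum p ε y z) {c : ℝ} (hc : 0 < c) :
    AlmostLpSum p ε (c • y) z := fun lam => by
  have hnorm : ‖c • y + lam • z‖ = c * ‖y + (lam / c) • z‖ := by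
    rw [show c • y + lam • z = c • (y + (lam / c) • z) by
      rw [smul_add, smul_smul, mul_div_cancel₀ _ hc.ne'], norm_smul, Real.norm_of_nonneg hc.le]
  have hpair : lpPairNorm p ‖c • y‖ |lam| = c * lpPairNorm p ‖y‖ |lam / c| := by
    rw [← lpPairNorm_mul_mul hp hc.le (norm_nonneg y) (abs_nonneg _), norm_smul,
      Real.norm_of_nonneg hc.le, abs_div, abs_of_pos hc, mul_div_cancel₀ _ hc.ne']
  obtain ⟨hlow, hup⟩ := h (lam / c)
  rw [hnorm, hpair]
  rw [mul_left_comm, mul_left_comm (1 + ε)]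
  exact ⟨mul_le_mul_of_nonneg_left hlow hc.le, mul_le_mul_of_nonneg_left hup hc.le⟩

theorem not_almostLpSum_self (hε : ε < 1) : ¬ AlmostLpSum p ε z z := fun h => by
  have hlow := (h (-1)).1
  rw [neg_one_smul, add_neg_cancel, norm_zero] at hlow
  have : 0 < lpPairNorm p ‖z‖ |(-1 : ℝ)| := by
    unfold lpPairNorm
    rw [abs_neg, abs_one, Real.one_rpow]
    positivity
  nlinarith

theorem forall_mem_almostLpSum_of_norm_eq_one (hp : 0 < p) (hε : 0 ≤ ε) (hz : ‖z‖ = 1)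
    {F : Submodule ℝ X} (h : ∀ y ∈ F, ‖y‖ = 1 → AlmostLpSum p ε y z) :
    ∀ y ∈ F, AlmostLpSum p ε y z := by
  intro y hy
  rcases eq_or_ne y 0 with rfl | hy0
  · exact almostLpSum_zero_left hp hε hz
  · have hunit := h (‖y‖⁻¹ • y) (F.smul_mem _ hy) (norm_smul_inv_norm hy0)
    simpa [smul_smul, hy0] using hunit.smul hp (norm_pos_iff.2 hy0)

theorem exists_gt_forall_mem_span_almostLpSum (hp : 0 < p) (hε0 : 0 ≤ ε) (hε1 : ε < 1)
    {x : ℕ → X} (hx : ∀ n, ‖x n‖ = 1) {m : ℕ}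
    (h : ∃ n, ∀ y ∈ Submodule.span ℝ (x '' ↑(range (m + 1))), ‖y‖ = 1 →
      AlmostLpSum p ε y (x n)) :
    ∃ n, m < n ∧ ∀ y ∈ Submodule.span ℝ (x '' ↑(range (m + 1))), AlmostLpSum p ε y (x n) := by
  obtain ⟨n, hn⟩ := h
  refine ⟨n, lt_of_not_ge fun hnm => ?_, forall_mem_almostLpSum_of_norm_eq_one hp hε0 (hx n) hn⟩
  have hmem : x n ∈ Submodule.span ℝ (x '' ↑(range (m + 1))) :=
    Submodule.subset_span ⟨n, mem_range.2 (Nat.lt_succ_of_le hnm), rfl⟩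
  exact not_almostLpSum_self hε1 (hn _ hmem (hx n))

theorem lp_bounds_of_forall_almostLpSum (hp : 0 < p) {z : ℕ → X} {θ : ℕ → ℝ}
    (hθ0 : ∀ j, 0 ≤ θ j) (hθ1 : ∀ j, θ j ≤ 1)
    (hz : ∀ (lam : ℕ → ℝ) (l : ℕ), AlmostLpSum p (θ l) (∑ j ∈ range l, lam j • z j) (z l))
    (lam : ℕ → ℝ) (l : ℕ) :
    (∏ j ∈ range l, (1 - θ j)) * (∑ j ∈ range l, |lam j| ^ p) ^ (1 / p) ≤
        ‖∑ j ∈ range l, lam j • z j‖ ∧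
      ‖∑ j ∈ range l, lam j • z j‖ ≤
        (∏ j ∈ range l, (1 + θ j)) * (∑ j ∈ range l, |lam j| ^ p) ^ (1 / p) := by
  induction l with
  | zero => simp [Real.zero_rpow (inv_pos.2 hp).ne']
  | succ l ih =>
    set B := ∑ j ∈ range l, |lam j| ^ p
    set S := ∑ j ∈ range l, lam j • z j
    set u := ∏ j ∈ range l, (1 - θ j)
    set U := ∏ j ∈ range l, (1 + θ j)
    have hB : 0 ≤ B := sum_nonneg fun j _ => by positivity
    have hβ : 0 ≤ |lam l| := abs_nonneg _
    have hu0 : 0 ≤ u := prod_nonneg fun j _ => sub_nonneg.2 (hθ1 j)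
    have hu1 : u ≤ 1 :=
      prod_le_one (fun j _ => sub_nonneg.2 (hθ1 j)) fun j _ => sub_le_self _ (hθ0 j)
    have hU1 : 1 ≤ U := one_le_prod fun j _ => le_add_of_nonneg_right (hθ0 j)
    obtain ⟨hlow, hup⟩ := hz lam l (lam l)
    rw [sum_range_succ, sum_range_succ, prod_range_succ, prod_range_succ,
      ← lpPairNorm_rpow_one_div_left hp hB]
    constructor
    · calc u * (1 - θ l) * lpPairNorm p (B ^ (1 / p)) |lam l|
          = (1 - θ l) * (u * lpPairNorm p (B ^ (1 / p)) |lam l|) := by ring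
        _ ≤ (1 - θ l) * lpPairNorm p (u * B ^ (1 / p)) |lam l| :=
          mul_le_mul_of_nonneg_left
            (mul_lpPairNorm_le_lpPairNorm_mul_left hp hu0 hu1 (by positivity) hβ)
            (sub_nonneg.2 (hθ1 l))
        _ ≤ (1 - θ l) * lpPairNorm p ‖S‖ |lam l| :=
          mul_le_mul_of_nonneg_left (lpPairNorm_le_lpPairNorm hp (by positivity) ih.1 hβ le_rfl)
            (sub_nonneg.2 (hθ1 l))
        _ ≤ _ := hlow
    · calc _ ≤ (1 + θ l) * lpPairNorm p ‖S‖ |lam l| := hup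
        _ ≤ (1 + θ l) * lpPairNorm p (U * B ^ (1 / p)) |lam l| :=
          mul_le_mul_of_nonneg_left (lpPairNorm_le_lpPairNorm hp (norm_nonneg S) ih.2 hβ le_rfl)
            (by linarith [hθ0 l])
        _ ≤ (1 + θ l) * (U * lpPairNorm p (B ^ (1 / p)) |lam l|) :=
          mul_le_mul_of_nonneg_left
            (lpPairNorm_mul_left_le_mul_lpPairNorm hp hU1 (by positivity) hβ)
            (by linarith [hθ0 l])
        _ = U * (1 + θ l) * lpPairNorm p (B ^ (1 / p)) |lam l| := by ring

end AlmostLpSum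

theorem exists_strictMono_forall_exists_le {Q : ℕ → ℕ → ℕ → Prop}
    (h : ∀ l m, ∃ n, m < n ∧ Q l m n) :
    ∃ φ : ℕ → ℕ, StrictMono φ ∧ ∀ l, ∃ m, (∀ j < l, φ j ≤ m) ∧ Q l m (φ l) := by
  choose f hf_gt hfQ using h
  -- `ψ l` bounds the indices chosen before step `l`, and `φ l = ψ (l + 1)`.
  let ψ : ℕ → ℕ := fun l => Nat.rec 0 (fun k prev => f k prev) l
  have hψ : StrictMono ψ := strictMono_nat_of_lt_succ fun l => hf_gt l (ψ l)
  exact ⟨fun l => ψ (l + 1), hψ.comp (strictMono_id.add_const 1),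
    fun l => ⟨ψ l, fun j hj => hψ.monotone hj, hfQ l (ψ l)⟩⟩

/-- Gliding-hump extraction of an almost-isometric `l_p`-subsequence. -/
theorem stmt_12 {X : Type*} [NormedAddCommGroup X] [NormedSpace ℝ X]
    (p : ℝ) (hp : 1 ≤ p) (x : ℕ → X) (hx : ∀ n, ‖x n‖ = 1)
    (hyp : ∀ ε : ℝ, 0 < ε → ε < 1 →
      ∀ (s : Finset ℕ) (F : Submodule ℝ X), F ≤ Submodule.span ℝ (x '' ↑s) →
        ∃ n : ℕ, ∀ y ∈ F, ‖y‖ = 1 → ∀ lam : ℝ,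
          (1 - ε) * (‖y‖ ^ p + |lam| ^ p) ^ (1 / p) ≤ ‖y + lam • x n‖ ∧
          ‖y + lam • x n‖ ≤ (1 + ε) * (‖y‖ ^ p + |lam| ^ p) ^ (1 / p)) :
    ∀ ε : ℝ, 0 < ε → ∃ φ : ℕ → ℕ, StrictMono φ ∧
      ∀ (lam : ℕ → ℝ) (l : ℕ),
        (1 - ε) * (∑ j ∈ range l, |lam j| ^ p) ^ (1 / p) ≤
          ‖∑ j ∈ range l, lam j • x (φ j)‖ ∧
        ‖∑ j ∈ range l, lam j • x (φ j)‖ ≤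
          (1 + ε) * (∑ j ∈ range l, |lam j| ^ p) ^ (1 / p) := by
  intro ε hε
  have hp0 : 0 < p := by linarith
  obtain ⟨θ, hθ, hprod⟩ := exists_seq_one_sub_le_prod_and_prod_le_one_add hε
  obtain ⟨φ, hφ, hφθ⟩ := exists_strictMono_forall_exists_le fun l m =>
    exists_gt_forall_mem_span_almostLpSum hp0 (hθ l).1.le (hθ l).2 hx
      (hyp (θ l) (hθ l).1 (hθ l).2 _ _ le_rfl)
  have hz : ∀ (lam : ℕ → ℝ) (l : ℕ),
      AlmostLpSum p (θ l) (∑ j ∈ range l, lam j • x (φ j)) (x (φ l)) := by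
    intro lam l
    obtain ⟨m, hm, hspan⟩ := hφθ l
    exact hspan _ (Submodule.sum_smul_mem _ _ fun j hj =>
      Submodule.subset_span ⟨φ j, mem_range.2 (Nat.lt_succ_of_le (hm j (mem_range.1 hj))), rfl⟩)
  refine ⟨φ, hφ, fun lam l => ?_⟩
  obtain ⟨hlow, hup⟩ := lp_bounds_of_forall_almostLpSum hp0 (fun j => (hθ j).1.le)
    (fun j => (hθ j).2.le) hz lam l
  have hΛ : 0 ≤ (∑ j ∈ range l, |lam j| ^ p) ^ (1 / p) := by positivity
  exact ⟨(mul_le_mul_of_nonneg_right (hprod l).1 hΛ).trans hlow,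
    hup.trans (mul_le_mul_of_nonneg_right (hprod l).2 hΛ)⟩
end
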